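/- Let R be a reduced crystallographic root system with set of positive roots R⁺ and simple roots S, let I be a subset of S, and let (d_α)_{α ∈ S\I} be rational (or real) numbers with 0 ≤ d_α < 1 for all α. Then for every positive root β in R⁺ \ R_I⁺ one has the strict inequality ⟨2ρ^P − ρ − Σ_{α ∈ S\I} d_α ϖ_α , β∨⟩ > 0. -/

import Mathlib

/-!
Common setup: a reduced crystallographic root system realized in a real inner
product space, together with a chosen set of simple roots.  For a root `α`,
`cpair v α = ⟨v, α∨⟩ = 2⟪v,α⟫/⟪α,α⟫` is the pairing with the coroot `α∨`, and
`sref α` is the reflection in `α`.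
-/

open scoped RealInnerProductSpace
open Finset

/-- `cpair v α = ⟨v, α∨⟩ = 2⟪v,α⟫/⟪α,α⟫`, the pairing of `v` with the coroot of `α`. -/
noncomputable def cpair {V : Type*} [NormedAddCommGroup V] [InnerProductSpace ℝ V]
    (v α : V) : ℝ := 2 * ⟪v, α⟫ / ⟪α, α⟫

/-- The reflection in the root `α`: `v ↦ v - ⟨v, α∨⟩ α`. -/
noncomputable def sref {V : Type*} [NormedAddCommGroup V] [InnerProductSpace ℝ V]
    (α : V) : V → V := fun v => v - cpair v α • α

/-- A reduced crystallographic root system in a real inner product space,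
with a chosen set of simple roots (every root is an integral linear combination
of the simple roots, with coefficients all nonnegative or all nonpositive). -/
structure RCRS (V : Type*) [NormedAddCommGroup V] [InnerProductSpace ℝ V] where
  roots : Finset V
  zero_not_mem : (0 : V) ∉ roots
  crystallographic : ∀ α ∈ roots, ∀ β ∈ roots, ∃ n : ℤ, cpair β α = (n : ℝ)
  reflect_mem : ∀ α ∈ roots, ∀ β ∈ roots, sref α β ∈ roots
  reduced : ∀ α ∈ roots, ∀ t : ℝ, t • α ∈ roots → t = 1 ∨ t = -1
  simple : Finset V
  simple_subset : simple ⊆ roots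
  simple_indep : LinearIndependent ℝ ((↑) : simple → V)
  exists_coeffs : ∀ β ∈ roots, ∃ c : V → ℤ,
    ((∀ α ∈ simple, 0 ≤ c α) ∨ (∀ α ∈ simple, c α ≤ 0)) ∧
    β = ∑ α ∈ simple, (c α : ℝ) • α

namespace RCRS

variable {V : Type*} [NormedAddCommGroup V] [InnerProductSpace ℝ V] [DecidableEq V] (Φ : RCRS V)

open Classical in
/-- `R⁺`: the set of positive roots, i.e. the roots that are nonnegative integral
linear combinations of simple roots. -/
noncomputable def posRoots : Finset V :=
  Φ.roots.filter (fun β => ∃ c : V → ℤ, (∀ α ∈ Φ.simple, 0 ≤ c α) ∧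
    β = ∑ α ∈ Φ.simple, (c α : ℝ) • α)

open Classical in
/-- `R_I⁺`: the set of positive roots that are integral linear combinations of the
simple roots belonging to `I`. -/
noncomputable def posRootsOf (I : Finset V) : Finset V :=
  Φ.posRoots.filter (fun β => ∃ c : V → ℤ, β = ∑ α ∈ I, (c α : ℝ) • α)

/-- `ρ`: the half sum of the positive roots. -/
noncomputable def rho : V := (2 : ℝ)⁻¹ • ∑ β ∈ Φ.posRoots, β

/-- `ρ^P`: the half sum of the positive roots that are not in `R_I⁺`. -/
noncomputable def rhoP (I : Finset V) : V :=
  (2 : ℝ)⁻¹ • ∑ β ∈ Φ.posRoots \ Φ.posRootsOf I, β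

/-- `ϖ` is a system of fundamental weights: `⟨ϖ α, β∨⟩ = δ_{α β}` for simple `α`, `β`. -/
def IsFundamentalWeights (ϖ : V → V) : Prop :=
  ∀ α ∈ Φ.simple, ∀ β ∈ Φ.simple, cpair (ϖ α) β = if α = β then 1 else 0

/-- The product of the reflections in the roots listed in `l`
(`wordProd [α₁, …, α_N] = s_{α₁} ∘ ⋯ ∘ s_{α_N}`). -/
noncomputable def wordProd : List V → (V → V) :=
  fun l => l.foldr (fun α f => sref α ∘ f) id

/-- Membership in the subgroup of the Weyl group generated by the reflections
`s_α`, `α ∈ I`. -/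
def MemWeyl (I : Finset V) (w : V → V) : Prop :=
  ∃ l : List V, (∀ α ∈ l, α ∈ I) ∧ w = wordProd l

/-- The length of `w` with respect to the generators `s_α`, `α ∈ I`. -/
noncomputable def lengthWeyl (I : Finset V) (w : V → V) : ℕ :=
  sInf {n | ∃ l : List V, l.length = n ∧ (∀ α ∈ l, α ∈ I) ∧ w = wordProd l}

/-- `w` is the longest element of the subgroup generated by the reflections
`s_α`, `α ∈ I`. -/
def IsLongest (I : Finset V) (w : V → V) : Prop :=
  MemWeyl I w ∧ ∀ u, MemWeyl I u → lengthWeyl I u ≤ lengthWeyl I w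

end RCRS

/-!
Let `w` be the longest element of the parabolic subgroup `W_I`. It permutes `R⁺ \ R_I⁺`, sends
`R_I⁺` to `-R_I⁺` and fixes `ϖ_α` for `α ∉ I`, so it maps `ρ - Σ_{α ∉ I} ϖ_α` to
`2ρ^P - ρ - Σ_{α ∉ I} ϖ_α`. Hence
`2ρ^P - ρ - Σ d_α ϖ_α = w (ρ - Σ_{α ∉ I} ϖ_α) + Σ_{α ∉ I} (1 - d_α) ϖ_α`.
Against `β` the first term gives `⟪ρ - Σ_{α ∉ I} ϖ_α, w⁻¹ β⟫ ≥ 0`, since `w⁻¹ β` is a positive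
root and `ρ - Σ_{α ∉ I} ϖ_α` pairs to `1` or `0` with every simple coroot; the second term is
positive since `β ∉ R_I⁺` has a positive coefficient at some simple root outside `I`.

The longest element is an element of `W_I` with the largest number of inversions: if it kept a
root of `R_I⁺` positive, it would keep a simple root `α ∈ I` positive, and `w s_α` would have one
inversion more.
-/

open Submodule (reflection_orthogonalComplement_singleton_eq_neg reflection_reflection)

theorem sref_eq_reflection {V : Type*} [NormedAddCommGroup V] [InnerProductSpace ℝ V]
    (α v : V) : sref α v = (ℝ ∙ α)ᗮ.reflection v := by
  rw [Submodule.reflection_orthogonal_apply, Submodule.reflection_singleton_apply, sref, cpair,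
    real_inner_self_eq_norm_sq, real_inner_comm]
  simp only [RCLike.ofReal_real_eq_id, id]
  module

theorem Finset.sum_comp_of_injOn_of_mapsTo {α M : Type*} [AddCommMonoid M] {s : Finset α}
    {f : α → α} (hf : Set.InjOn f s) (hs : Set.MapsTo f s s) (g : α → M) :
    ∑ x ∈ s, g (f x) = ∑ x ∈ s, g x :=
  Finset.sum_nbij f hs hf ((s.finite_toSet.injOn_iff_bijOn_of_mapsTo hs).mp hf).surjOn
    fun _ _ => rfl

theorem Finset.sum_ite_smul_self_eq {M : Type*} [AddCommGroup M] [Module ℝ M] [DecidableEq M]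
    {s : Finset M} {a : M} (ha : a ∈ s) :
    ∑ x ∈ s, ((if x = a then 1 else 0 : ℤ) : ℝ) • x = a := by
  simp [ha]

/-- The parabolic subgroup `W_I` of the Weyl group, taken as a submonoid: its generators are
involutions, so this is the subgroup they generate. -/
def weylSubmonoid {V : Type*} [NormedAddCommGroup V] [InnerProductSpace ℝ V] (I : Finset V) :
    Submonoid (V ≃ₗᵢ[ℝ] V) :=
  Submonoid.closure ((fun α => (ℝ ∙ α)ᗮ.reflection) '' I)

theorem reflection_mem_weylSubmonoid {V : Type*} [NormedAddCommGroup V] [InnerProductSpace ℝ V]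
    {I : Finset V} {α : V} (hα : α ∈ I) : (ℝ ∙ α)ᗮ.reflection ∈ weylSubmonoid I :=
  Submonoid.subset_closure ⟨α, hα, rfl⟩

namespace RCRS

variable {V : Type*} [NormedAddCommGroup V] [InnerProductSpace ℝ V] (Φ : RCRS V)
  {α β γ : V} {I : Finset V} {w : V ≃ₗᵢ[ℝ] V}

theorem ne_zero_of_mem_roots (hβ : β ∈ Φ.roots) : β ≠ 0 :=
  fun h => Φ.zero_not_mem (h ▸ hβ)

theorem reflection_mem_roots (hα : α ∈ Φ.roots) (hβ : β ∈ Φ.roots) :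
    (ℝ ∙ α)ᗮ.reflection β ∈ Φ.roots :=
  sref_eq_reflection α β ▸ Φ.reflect_mem α hα β hβ

theorem neg_mem_roots (hβ : β ∈ Φ.roots) : -β ∈ Φ.roots :=
  reflection_orthogonalComplement_singleton_eq_neg (𝕜 := ℝ) β ▸ Φ.reflection_mem_roots hβ hβ

theorem apply_mem_roots (hI : I ⊆ Φ.roots) (hw : w ∈ weylSubmonoid I) (hβ : β ∈ Φ.roots) :
    w β ∈ Φ.roots := by
  induction hw using Submonoid.closure_induction generalizing β with
  | mem _ hx =>
    obtain ⟨α, hα, rfl⟩ := hx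
    exact Φ.reflection_mem_roots (hI hα) hβ
  | one => exact hβ
  | mul _ _ _ _ hx hy => exact hx (hy hβ)

theorem mem_posRoots : β ∈ Φ.posRoots ↔ β ∈ Φ.roots ∧
    ∃ c : V → ℤ, (∀ α ∈ Φ.simple, 0 ≤ c α) ∧ β = ∑ α ∈ Φ.simple, (c α : ℝ) • α := by
  classical
  simp [posRoots]

theorem mem_posRootsOf :
    β ∈ Φ.posRootsOf I ↔ β ∈ Φ.posRoots ∧ ∃ c : V → ℤ, β = ∑ α ∈ I, (c α : ℝ) • α := by
  classical
  simp [posRootsOf]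

theorem posRootsOf_subset : Φ.posRootsOf I ⊆ Φ.posRoots :=
  fun _ h => (Φ.mem_posRootsOf.mp h).1

theorem mem_posRoots_or_neg_mem (hβ : β ∈ Φ.roots) : β ∈ Φ.posRoots ∨ -β ∈ Φ.posRoots := by
  obtain ⟨c, hc | hc, hβc⟩ := Φ.exists_coeffs β hβ
  · exact Or.inl (Φ.mem_posRoots.mpr ⟨hβ, c, hc, hβc⟩)
  · refine Or.inr (Φ.mem_posRoots.mpr
      ⟨Φ.neg_mem_roots hβ, -c, fun α hα => by simpa using hc α hα, ?_⟩)
    simp [hβc]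

variable [DecidableEq V]

theorem simple_mem_posRoots (hα : α ∈ Φ.simple) : α ∈ Φ.posRoots :=
  Φ.mem_posRoots.mpr ⟨Φ.simple_subset hα, _, fun x _ => by split_ifs <;> simp,
    (Finset.sum_ite_smul_self_eq hα).symm⟩

theorem simple_mem_posRootsOf (hI : I ⊆ Φ.simple) (hα : α ∈ I) : α ∈ Φ.posRootsOf I :=
  Φ.mem_posRootsOf.mpr ⟨Φ.simple_mem_posRoots (hI hα), _, (Finset.sum_ite_smul_self_eq hα).symm⟩

variable {ϖ : V → V}

theorem inner_weight_simple (hϖ : Φ.IsFundamentalWeights ϖ) (hγ : γ ∈ Φ.simple)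
    (hα : α ∈ Φ.simple) : ⟪ϖ γ, α⟫ = if γ = α then ⟪α, α⟫ / 2 else 0 := by
  have hα0 : ⟪α, α⟫ ≠ 0 := inner_self_ne_zero.mpr (Φ.ne_zero_of_mem_roots (Φ.simple_subset hα))
  have h := hϖ γ hγ α hα
  rw [cpair, div_eq_iff hα0] at h
  split_ifs at h ⊢ <;> linarith

theorem inner_weight_sum_smul (hϖ : Φ.IsFundamentalWeights ϖ) {J : Finset V}
    (hJ : J ⊆ Φ.simple) (c : V → ℝ) (hγ : γ ∈ Φ.simple) :
    ⟪ϖ γ, ∑ α ∈ J, c α • α⟫ = if γ ∈ J then c γ * (⟪γ, γ⟫ / 2) else 0 := by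
  simp only [inner_sum, real_inner_smul_right]
  rw [Finset.sum_congr rfl fun α hα => by
    rw [Φ.inner_weight_simple hϖ hγ (hJ hα), mul_ite, mul_zero]]
  exact Finset.sum_ite_eq J γ _

theorem inner_weight_nonneg (hϖ : Φ.IsFundamentalWeights ϖ) (hβ : β ∈ Φ.posRoots)
    (hγ : γ ∈ Φ.simple) : 0 ≤ ⟪ϖ γ, β⟫ := by
  obtain ⟨hβ, c, hc, rfl⟩ := Φ.mem_posRoots.mp hβ
  rw [Φ.inner_weight_sum_smul hϖ subset_rfl _ hγ, if_pos hγ]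
  exact mul_nonneg (Int.cast_nonneg (hc γ hγ)) (div_nonneg real_inner_self_nonneg zero_le_two)

theorem eq_sum_of_inner_weight_eq_zero (hϖ : Φ.IsFundamentalWeights ϖ) (hI : I ⊆ Φ.simple)
    {c : V → ℝ} (hβ : β = ∑ α ∈ Φ.simple, c α • α)
    (h : ∀ γ ∈ Φ.simple \ I, ⟪ϖ γ, β⟫ = 0) : β = ∑ α ∈ I, c α • α := by
  rw [hβ]
  refine (Finset.sum_subset hI fun γ hγ hγI => ?_).symm
  have hγ0 : ⟪γ, γ⟫ / 2 ≠ 0 :=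
    div_ne_zero (inner_self_ne_zero.mpr (Φ.ne_zero_of_mem_roots (Φ.simple_subset hγ))) two_ne_zero
  have hcγ := h γ (mem_sdiff.mpr ⟨hγ, hγI⟩)
  rw [hβ, Φ.inner_weight_sum_smul hϖ subset_rfl c hγ, if_pos hγ, mul_eq_zero] at hcγ
  rw [hcγ.resolve_right hγ0, zero_smul]

theorem mem_posRootsOf_iff (hϖ : Φ.IsFundamentalWeights ϖ) (hI : I ⊆ Φ.simple)
    (hβ : β ∈ Φ.posRoots) : β ∈ Φ.posRootsOf I ↔ ∀ γ ∈ Φ.simple \ I, ⟪ϖ γ, β⟫ = 0 := by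
  constructor
  · intro hβI γ hγ
    obtain ⟨-, c, rfl⟩ := Φ.mem_posRootsOf.mp hβI
    rw [Φ.inner_weight_sum_smul hϖ hI _ (mem_sdiff.mp hγ).1, if_neg (mem_sdiff.mp hγ).2]
  · intro h
    obtain ⟨-, c, -, hc⟩ := Φ.mem_posRoots.mp hβ
    exact Φ.mem_posRootsOf.mpr ⟨hβ, c, Φ.eq_sum_of_inner_weight_eq_zero hϖ hI hc h⟩

theorem exists_nonneg_coeffs_of_mem_posRootsOf (hϖ : Φ.IsFundamentalWeights ϖ)
    (hI : I ⊆ Φ.simple) (hβ : β ∈ Φ.posRootsOf I) :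
    ∃ c : V → ℝ, (∀ α ∈ I, 0 ≤ c α) ∧ β = ∑ α ∈ I, c α • α := by
  have hβ' := Φ.posRootsOf_subset hβ
  obtain ⟨-, c, hc, hβc⟩ := Φ.mem_posRoots.mp hβ'
  exact ⟨_, fun α hα => Int.cast_nonneg (hc α (hI hα)),
    Φ.eq_sum_of_inner_weight_eq_zero hϖ hI hβc ((Φ.mem_posRootsOf_iff hϖ hI hβ').mp hβ)⟩

theorem exists_inner_weight_pos (hϖ : Φ.IsFundamentalWeights ϖ) (hβ : β ∈ Φ.posRoots) :
    ∃ γ ∈ Φ.simple, 0 < ⟪ϖ γ, β⟫ := by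
  by_contra! h
  obtain ⟨hβ', c, -, hc⟩ := Φ.mem_posRoots.mp hβ
  have hβ0 := Φ.eq_sum_of_inner_weight_eq_zero hϖ (empty_subset _) hc fun γ hγ =>
    le_antisymm (h γ (mem_sdiff.mp hγ).1) (Φ.inner_weight_nonneg hϖ hβ (mem_sdiff.mp hγ).1)
  exact Φ.ne_zero_of_mem_roots hβ' (by simpa using hβ0)

theorem exists_inner_weight_pos_of_mem_sdiff (hϖ : Φ.IsFundamentalWeights ϖ)
    (hI : I ⊆ Φ.simple) (hβ : β ∈ Φ.posRoots \ Φ.posRootsOf I) :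
    ∃ γ ∈ Φ.simple \ I, 0 < ⟪ϖ γ, β⟫ := by
  obtain ⟨hβ, hβI⟩ := mem_sdiff.mp hβ
  by_contra! h
  exact hβI ((Φ.mem_posRootsOf_iff hϖ hI hβ).mpr fun γ hγ =>
    le_antisymm (h γ hγ) (Φ.inner_weight_nonneg hϖ hβ (mem_sdiff.mp hγ).1))

theorem neg_notMem_posRoots (hϖ : Φ.IsFundamentalWeights ϖ) (hβ : β ∈ Φ.posRoots) :
    -β ∉ Φ.posRoots := fun hβ' => by
  obtain ⟨γ, hγ, hpos⟩ := Φ.exists_inner_weight_pos hϖ hβ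
  have := Φ.inner_weight_nonneg hϖ hβ' hγ
  rw [inner_neg_right] at this
  linarith

theorem mem_posRoots_of_inner_weight_pos (hϖ : Φ.IsFundamentalWeights ϖ) (hβ : β ∈ Φ.roots)
    (hγ : γ ∈ Φ.simple) (hpos : 0 < ⟪ϖ γ, β⟫) : β ∈ Φ.posRoots :=
  (Φ.mem_posRoots_or_neg_mem hβ).resolve_right fun hβ' => by
    have := Φ.inner_weight_nonneg hϖ hβ' hγ
    rw [inner_neg_right] at this
    linarith

theorem inner_weight_reflection (hϖ : Φ.IsFundamentalWeights ϖ) (hγ : γ ∈ Φ.simple)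
    (hα : α ∈ Φ.simple) (hγα : γ ≠ α) (v : V) :
    ⟪ϖ γ, (ℝ ∙ α)ᗮ.reflection v⟫ = ⟪ϖ γ, v⟫ := by
  rw [← sref_eq_reflection, sref, inner_sub_right, real_inner_smul_right,
    Φ.inner_weight_simple hϖ hγ hα, if_neg hγα, mul_zero, sub_zero]

theorem reflection_mem_posRoots_erase (hϖ : Φ.IsFundamentalWeights ϖ) (hα : α ∈ Φ.simple)
    (hβ : β ∈ Φ.posRoots.erase α) : (ℝ ∙ α)ᗮ.reflection β ∈ Φ.posRoots.erase α := by
  obtain ⟨hβα, hβ⟩ := mem_erase.mp hβ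
  have hαr := Φ.simple_subset hα
  have hβr := (Φ.mem_posRoots.mp hβ).1
  -- by reducedness, `β` is not a multiple of `α`
  obtain ⟨γ, hγ, hγα, hpos⟩ : ∃ γ ∈ Φ.simple, γ ≠ α ∧ 0 < ⟪ϖ γ, β⟫ := by
    by_contra! h
    obtain ⟨-, c, -, hc⟩ := Φ.mem_posRoots.mp hβ
    have hβc : β = (c α : ℝ) • α := by
      simpa using Φ.eq_sum_of_inner_weight_eq_zero hϖ (singleton_subset_iff.mpr hα) hc
        fun γ hγ => le_antisymm (h γ (mem_sdiff.mp hγ).1 (by simpa using (mem_sdiff.mp hγ).2))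
          (Φ.inner_weight_nonneg hϖ hβ (mem_sdiff.mp hγ).1)
    rcases Φ.reduced α hαr _ (hβc ▸ hβr) with h1 | h1
    · exact hβα (by rw [hβc, h1, one_smul])
    · exact Φ.neg_notMem_posRoots hϖ (Φ.simple_mem_posRoots hα)
        (by rwa [hβc, h1, neg_one_smul] at hβ)
  refine mem_erase.mpr ⟨fun h => ?_, Φ.mem_posRoots_of_inner_weight_pos hϖ
    (Φ.reflection_mem_roots hαr hβr) hγ (by rwa [Φ.inner_weight_reflection hϖ hγ hα hγα])⟩
  have hβα' : β = -α := by
    rw [← reflection_reflection (ℝ ∙ α)ᗮ β, h, reflection_orthogonalComplement_singleton_eq_neg]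
  exact Φ.neg_notMem_posRoots hϖ (Φ.simple_mem_posRoots hα) (hβα' ▸ hβ)

theorem inner_rho_simple (hϖ : Φ.IsFundamentalWeights ϖ) (hα : α ∈ Φ.simple) :
    ⟪Φ.rho, α⟫ = ⟪α, α⟫ / 2 := by
  have hneg : ∀ x, ⟪(ℝ ∙ α)ᗮ.reflection x, α⟫ = -⟪x, α⟫ := fun x => by
    have h := LinearIsometryEquiv.inner_map_map (ℝ ∙ α)ᗮ.reflection x α
    rw [reflection_orthogonalComplement_singleton_eq_neg, inner_neg_right] at h
    linarith
  have hperm := Finset.sum_comp_of_injOn_of_mapsTo (ℝ ∙ α)ᗮ.reflection.injective.injOn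
    (fun β hβ => Φ.reflection_mem_posRoots_erase hϖ hα hβ) fun β => ⟪β, α⟫
  simp only [hneg, sum_neg_distrib] at hperm
  rw [rho, real_inner_smul_left, sum_inner, ← add_sum_erase _ _ (Φ.simple_mem_posRoots hα)]
  linarith

theorem apply_weight_eq (hϖ : Φ.IsFundamentalWeights ϖ) (hI : I ⊆ Φ.simple)
    (hw : w ∈ weylSubmonoid I) (hγ : γ ∈ Φ.simple \ I) : w (ϖ γ) = ϖ γ := by
  obtain ⟨hγ, hγI⟩ := mem_sdiff.mp hγ
  induction hw using Submonoid.closure_induction with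
  | mem _ hx =>
    obtain ⟨α, hα, rfl⟩ := hx
    refine Submodule.reflection_mem_subspace_eq_self
      (Submodule.mem_orthogonal_singleton_iff_inner_left.mpr ?_)
    rw [Φ.inner_weight_simple hϖ hγ (hI hα), if_neg fun h : γ = α => hγI (h ▸ hα)]
  | one => rfl
  | mul _ _ _ _ hx hy => simp only [LinearIsometryEquiv.coe_mul, Function.comp_apply, hy, hx]

theorem inner_weight_apply (hϖ : Φ.IsFundamentalWeights ϖ) (hI : I ⊆ Φ.simple)
    (hw : w ∈ weylSubmonoid I) (hγ : γ ∈ Φ.simple \ I) (v : V) : ⟪ϖ γ, w v⟫ = ⟪ϖ γ, v⟫ := by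
  rw [← Φ.apply_weight_eq hϖ hI hw hγ, LinearIsometryEquiv.inner_map_map,
    Φ.apply_weight_eq hϖ hI hw hγ]

theorem apply_mem_posRoots_sdiff (hϖ : Φ.IsFundamentalWeights ϖ) (hI : I ⊆ Φ.simple)
    (hw : w ∈ weylSubmonoid I) (hβ : β ∈ Φ.posRoots \ Φ.posRootsOf I) :
    w β ∈ Φ.posRoots \ Φ.posRootsOf I := by
  obtain ⟨γ, hγ, hpos⟩ := Φ.exists_inner_weight_pos_of_mem_sdiff hϖ hI hβ
  rw [← Φ.inner_weight_apply hϖ hI hw hγ] at hpos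
  have hwβ := Φ.mem_posRoots_of_inner_weight_pos hϖ
    (Φ.apply_mem_roots (hI.trans Φ.simple_subset) hw (Φ.mem_posRoots.mp (mem_sdiff.mp hβ).1).1)
    (mem_sdiff.mp hγ).1 hpos
  exact mem_sdiff.mpr ⟨hwβ, fun h => hpos.ne' ((Φ.mem_posRootsOf_iff hϖ hI hwβ).mp h γ hγ)⟩

theorem apply_mem_posRootsOf_or_neg_mem (hϖ : Φ.IsFundamentalWeights ϖ) (hI : I ⊆ Φ.simple)
    (hw : w ∈ weylSubmonoid I) (hβ : β ∈ Φ.posRootsOf I) :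
    w β ∈ Φ.posRootsOf I ∨ -w β ∈ Φ.posRootsOf I := by
  have hβ' := Φ.posRootsOf_subset hβ
  have hvan := (Φ.mem_posRootsOf_iff hϖ hI hβ').mp hβ
  have hwβ := Φ.apply_mem_roots (hI.trans Φ.simple_subset) hw (Φ.mem_posRoots.mp hβ').1
  refine (Φ.mem_posRoots_or_neg_mem hwβ).imp (fun h => ?_) (fun h => ?_) <;>
    refine (Φ.mem_posRootsOf_iff hϖ hI h).mpr fun γ hγ => ?_
  · rw [Φ.inner_weight_apply hϖ hI hw hγ, hvan γ hγ]
  · rw [inner_neg_right, Φ.inner_weight_apply hϖ hI hw hγ, hvan γ hγ, neg_zero]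

theorem reflection_mem_posRootsOf_erase (hϖ : Φ.IsFundamentalWeights ϖ) (hI : I ⊆ Φ.simple)
    (hα : α ∈ I) (hβ : β ∈ (Φ.posRootsOf I).erase α) :
    (ℝ ∙ α)ᗮ.reflection β ∈ (Φ.posRootsOf I).erase α := by
  obtain ⟨hβα, hβ⟩ := mem_erase.mp hβ
  obtain ⟨hsβα, hsβ⟩ := mem_erase.mp <| Φ.reflection_mem_posRoots_erase hϖ (hI hα)
    (mem_erase.mpr ⟨hβα, Φ.posRootsOf_subset hβ⟩)
  refine mem_erase.mpr ⟨hsβα, ?_⟩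
  exact (Φ.apply_mem_posRootsOf_or_neg_mem hϖ hI (reflection_mem_weylSubmonoid hα) hβ).resolve_right
    fun h => Φ.neg_notMem_posRoots hϖ hsβ (Φ.posRootsOf_subset h)

/-- For `w ∈ W_I` this is the length of `w`. -/
noncomputable def numInversions (I : Finset V) (w : V ≃ₗᵢ[ℝ] V) : ℕ :=
  #{β ∈ Φ.posRootsOf I | -w β ∈ Φ.posRootsOf I}

theorem numInversions_le (I : Finset V) (w : V ≃ₗᵢ[ℝ] V) :
    Φ.numInversions I w ≤ #(Φ.posRootsOf I) :=
  card_filter_le _ _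

theorem numInversions_mul_reflection (hϖ : Φ.IsFundamentalWeights ϖ) (hI : I ⊆ Φ.simple)
    (hα : α ∈ I) (hwα : w α ∈ Φ.posRootsOf I) :
    Φ.numInversions I (w * (ℝ ∙ α)ᗮ.reflection) = Φ.numInversions I w + 1 := by
  have hαI := Φ.simple_mem_posRootsOf hI hα
  have hwα' : -w α ∉ Φ.posRootsOf I := fun h =>
    Φ.neg_notMem_posRoots hϖ (Φ.posRootsOf_subset hwα) (Φ.posRootsOf_subset h)
  have hsα : -(w * (ℝ ∙ α)ᗮ.reflection) α = w α := by
    rw [LinearIsometryEquiv.coe_mul, Function.comp_apply,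
      reflection_orthogonalComplement_singleton_eq_neg, map_neg, neg_neg]
  have hperm : ∑ β ∈ (Φ.posRootsOf I).erase α,
      (if -(w * (ℝ ∙ α)ᗮ.reflection) β ∈ Φ.posRootsOf I then 1 else 0) =
      ∑ β ∈ (Φ.posRootsOf I).erase α, if -w β ∈ Φ.posRootsOf I then 1 else 0 :=
    Finset.sum_comp_of_injOn_of_mapsTo (ℝ ∙ α)ᗮ.reflection.injective.injOn
      (fun β hβ => Φ.reflection_mem_posRootsOf_erase hϖ hI hα hβ)
      fun β => if -w β ∈ Φ.posRootsOf I then 1 else 0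
  rw [numInversions, numInversions, card_filter, card_filter, ← add_sum_erase _ _ hαI,
    ← add_sum_erase _ _ hαI, hperm, hsα, if_pos hwα, if_neg hwα', zero_add, add_comm]

theorem exists_apply_simple_mem_posRootsOf (hϖ : Φ.IsFundamentalWeights ϖ) (hI : I ⊆ Φ.simple)
    (hw : w ∈ weylSubmonoid I) (hβ : β ∈ Φ.posRootsOf I) (hwβ : w β ∈ Φ.posRootsOf I) :
    ∃ α ∈ I, w α ∈ Φ.posRootsOf I := by
  by_contra! h
  obtain ⟨c, hc, rfl⟩ := Φ.exists_nonneg_coeffs_of_mem_posRootsOf hϖ hI hβ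
  obtain ⟨γ, hγ, hpos⟩ := Φ.exists_inner_weight_pos hϖ (Φ.posRootsOf_subset hwβ)
  refine hpos.not_ge ?_
  rw [map_sum, inner_sum]
  refine sum_nonpos fun α hα => ?_
  have hwα := (Φ.apply_mem_posRootsOf_or_neg_mem hϖ hI hw
    (Φ.simple_mem_posRootsOf hI hα)).resolve_left (h α hα)
  have := Φ.inner_weight_nonneg hϖ (Φ.posRootsOf_subset hwα) hγ
  rw [inner_neg_right, neg_nonneg] at this
  rw [map_smul, real_inner_smul_right]
  exact mul_nonpos_of_nonneg_of_nonpos (hc α hα) this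

/-- The longest element of `W_I`. -/
theorem exists_forall_neg_apply_mem (hϖ : Φ.IsFundamentalWeights ϖ) (hI : I ⊆ Φ.simple) :
    ∃ w ∈ weylSubmonoid I, ∀ β ∈ Φ.posRootsOf I, -w β ∈ Φ.posRootsOf I := by
  have hbdd : BddAbove (Φ.numInversions I '' weylSubmonoid I) :=
    ⟨_, by rintro _ ⟨w, -, rfl⟩; exact Φ.numInversions_le I w⟩
  obtain ⟨w, hw, hmax⟩ :=
    Nat.sSup_mem ((Set.nonempty_of_mem (one_mem (weylSubmonoid I))).image _) hbdd
  refine ⟨w, hw, fun β hβ => by_contra fun hwβ => ?_⟩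
  obtain ⟨α, hα, hwα⟩ := Φ.exists_apply_simple_mem_posRootsOf hϖ hI hw hβ
    ((Φ.apply_mem_posRootsOf_or_neg_mem hϖ hI hw hβ).resolve_right hwβ)
  have := le_csSup hbdd ⟨_, mul_mem hw (reflection_mem_weylSubmonoid hα), rfl⟩
  rw [Φ.numInversions_mul_reflection hϖ hI hα hwα, hmax] at this
  omega

theorem apply_rho_sub_sum_weight (hϖ : Φ.IsFundamentalWeights ϖ) (hI : I ⊆ Φ.simple)
    (hw : w ∈ weylSubmonoid I) (hneg : ∀ β ∈ Φ.posRootsOf I, -w β ∈ Φ.posRootsOf I) :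
    w (Φ.rho - ∑ γ ∈ Φ.simple \ I, ϖ γ) =
      (2 : ℝ) • Φ.rhoP I - Φ.rho - ∑ γ ∈ Φ.simple \ I, ϖ γ := by
  have hfix : w (∑ β ∈ Φ.posRoots \ Φ.posRootsOf I, β) = ∑ β ∈ Φ.posRoots \ Φ.posRootsOf I, β := by
    rw [map_sum]
    exact Finset.sum_comp_of_injOn_of_mapsTo w.injective.injOn
      (fun β hβ => Φ.apply_mem_posRoots_sdiff hϖ hI hw hβ) id
  have hflip : w (∑ β ∈ Φ.posRootsOf I, β) = -∑ β ∈ Φ.posRootsOf I, β := by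
    rw [map_sum, ← neg_eq_iff_eq_neg, ← sum_neg_distrib]
    exact Finset.sum_comp_of_injOn_of_mapsTo (neg_injective.comp w.injective).injOn hneg id
  have hweights : w (∑ γ ∈ Φ.simple \ I, ϖ γ) = ∑ γ ∈ Φ.simple \ I, ϖ γ := by
    rw [map_sum]
    exact sum_congr rfl fun γ hγ => Φ.apply_weight_eq hϖ hI hw hγ
  have hrho : Φ.rho =
      (2 : ℝ)⁻¹ • ((∑ β ∈ Φ.posRoots \ Φ.posRootsOf I, β) + ∑ β ∈ Φ.posRootsOf I, β) := by
    rw [rho, sum_sdiff Φ.posRootsOf_subset]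
  rw [map_sub, hweights, hrho, map_smul, map_add, hfix, hflip, rhoP]
  module

theorem inner_rho_sub_sum_weight_nonneg (hϖ : Φ.IsFundamentalWeights ϖ) {δ : V}
    (hδ : δ ∈ Φ.posRoots) : 0 ≤ ⟪Φ.rho - ∑ γ ∈ Φ.simple \ I, ϖ γ, δ⟫ := by
  obtain ⟨-, c, hc, rfl⟩ := Φ.mem_posRoots.mp hδ
  rw [inner_sum]
  refine sum_nonneg fun α hα => ?_
  rw [real_inner_smul_right, inner_sub_left, Φ.inner_rho_simple hϖ hα, sum_inner,
    sum_congr rfl fun γ hγ => Φ.inner_weight_simple hϖ (mem_sdiff.mp hγ).1 hα, sum_ite_eq']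
  refine mul_nonneg (Int.cast_nonneg (hc α hα)) ?_
  split_ifs
  · rw [sub_self]
  · rw [sub_zero]
    exact div_nonneg real_inner_self_nonneg zero_le_two

theorem inner_sum_smul_weight_pos (hϖ : Φ.IsFundamentalWeights ϖ) (hI : I ⊆ Φ.simple)
    {e : V → ℝ} (he : ∀ α ∈ Φ.simple \ I, 0 < e α) (hβ : β ∈ Φ.posRoots \ Φ.posRootsOf I) :
    0 < ⟪∑ α ∈ Φ.simple \ I, e α • ϖ α, β⟫ := by
  obtain ⟨γ, hγ, hpos⟩ := Φ.exists_inner_weight_pos_of_mem_sdiff hϖ hI hβ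
  simp only [sum_inner, real_inner_smul_left]
  exact sum_pos' (fun α hα => mul_nonneg (he α hα).le
      (Φ.inner_weight_nonneg hϖ (mem_sdiff.mp hβ).1 (mem_sdiff.mp hα).1))
    ⟨γ, hγ, mul_pos (he γ hγ) hpos⟩

end RCRS

/-- For a subset `I ⊆ S`, real numbers `0 ≤ d_α < 1` (`α ∈ S\I`), and
every positive root `β ∈ R⁺ \ R_I⁺`, one has the strict inequality
`⟨2ρ^P − ρ − Σ_{α ∈ S\I} d_α ϖ_α, β∨⟩ > 0`. -/
theorem klt_flag_strict_ineq {V : Type*} [NormedAddCommGroup V] [InnerProductSpace ℝ V] [DecidableEq V]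
    (Φ : RCRS V)
    (I : Finset V) (hI : I ⊆ Φ.simple)
    (ϖ : V → V) (hϖ : Φ.IsFundamentalWeights ϖ)
    (d : V → ℝ) (hd : ∀ α ∈ Φ.simple \ I, 0 ≤ d α ∧ d α < 1) :
    ∀ β ∈ Φ.posRoots \ Φ.posRootsOf I,
      0 < cpair ((2 : ℝ) • Φ.rhoP I - Φ.rho - ∑ α ∈ Φ.simple \ I, d α • ϖ α) β := by
  intro β hβ
  obtain ⟨w, hw, hneg⟩ := Φ.exists_forall_neg_apply_mem hϖ hI
  have hmaps : Set.MapsTo w ↑(Φ.posRoots \ Φ.posRootsOf I) ↑(Φ.posRoots \ Φ.posRootsOf I) :=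
    fun δ hδ => Φ.apply_mem_posRoots_sdiff hϖ hI hw hδ
  obtain ⟨δ, hδ, rfl⟩ :=
    ((finite_toSet _).injOn_iff_bijOn_of_mapsTo hmaps |>.mp w.injective.injOn).surjOn hβ
  have hsplit : (2 : ℝ) • Φ.rhoP I - Φ.rho - ∑ α ∈ Φ.simple \ I, d α • ϖ α =
      w (Φ.rho - ∑ γ ∈ Φ.simple \ I, ϖ γ) + ∑ α ∈ Φ.simple \ I, (1 - d α) • ϖ α := by
    rw [Φ.apply_rho_sub_sum_weight hϖ hI hw hneg]
    simp only [sub_smul, one_smul, sum_sub_distrib]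
    abel
  have hpos : 0 < ⟪(2 : ℝ) • Φ.rhoP I - Φ.rho - ∑ α ∈ Φ.simple \ I, d α • ϖ α, w δ⟫ := by
    rw [hsplit, inner_add_left, LinearIsometryEquiv.inner_map_map]
    exact add_pos_of_nonneg_of_pos (Φ.inner_rho_sub_sum_weight_nonneg hϖ (mem_sdiff.mp hδ).1)
      (Φ.inner_sum_smul_weight_pos hϖ hI (fun α hα => sub_pos.mpr (hd α hα).2) hβ)
  exact div_pos (mul_pos two_pos hpos)
    (real_inner_self_pos.mpr (Φ.ne_zero_of_mem_roots (Φ.mem_posRoots.mp (mem_sdiff.mp hβ).1).1))
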